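/- arXiv:math/0608431 — 2 statements merged into one kernel-verified Lean document; each statement's English description precedes it below -/
import Mathlib

section
/- Let (Σ,σ) be a transitive subshift of finite type and A θ-Hölder. If u, u′ are two calibrated sub-actions for A which agree on Ω(A), then u = u′ on all of Σ; more generally u ≤ u′ on Ω(A) implies u ≤ u′ everywhere. -/
open MeasureTheory

section AubryMather

variable {r : ℕ} {M : Fin r → Fin r → Bool}

/-- One-sided subshift of finite type on `r` symbols with transition matrix `M`. -/
abbrev SigSp (r : ℕ) (M : Fin r → Fin r → Bool) :=
  {x : ℕ → Fin r // ∀ j, M (x j) (x (j + 1)) = true}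

/-- The dual subshift, with transposed transition matrix (coordinates `(…, y₁, y₀)`). -/
abbrev DualSp (r : ℕ) (M : Fin r → Fin r → Bool) :=
  {y : ℕ → Fin r // ∀ j, M (y (j + 1)) (y j) = true}

/-- The natural extension `Σ̂ ⊂ Σ* × Σ`: pairs `(y,x)` with `M (y₀, x₀) = 1`. -/
abbrev NatExt (r : ℕ) (M : Fin r → Fin r → Bool) :=
  {p : DualSp r M × SigSp r M // M (p.1.1 0) (p.2.1 0) = true}

/-- Prepend a symbol to a sequence. -/
def prepend (a : Fin r) (x : ℕ → Fin r) : ℕ → Fin r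
  | 0 => a
  | m + 1 => x m

/-- The left shift `σ` on `Σ`. -/
def shiftS (x : SigSp r M) : SigSp r M := ⟨fun n => x.1 (n + 1), fun j => x.2 (j + 1)⟩

/-- The projection `π₁(y,x) = x`. -/
def proj1 (p : NatExt r M) : SigSp r M := p.1.2

/-- `τ(y,x) = τ_y(x) = (y₀, x₀, x₁, …)`. -/
def tau (p : NatExt r M) : SigSp r M :=
  ⟨prepend (p.1.1.1 0) p.1.2.1, by
    intro j
    cases j with
    | zero => exact p.2
    | succ m => exact p.1.2.2 m⟩

/-- The two-sided shift `σ̂` on the natural extension. -/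
def hatShift (p : NatExt r M) : NatExt r M :=
  ⟨(⟨prepend (p.1.2.1 0) p.1.1.1, by
      intro j
      cases j with
      | zero => exact p.2
      | succ m => exact p.1.1.2 m⟩, shiftS p.1.2), p.1.2.2 0⟩

/-- Holonomic probability measures on `Σ̂`. -/
def Holonomic (μ : Measure (NatExt r M)) : Prop :=
  IsProbabilityMeasure μ ∧
    ∀ f : C(SigSp r M, ℝ), (∫ p, f (tau p) ∂μ) = ∫ p, f (proj1 p) ∂μ

/-- `β_A`, the maximal holonomic value of the potential `A`. -/
noncomputable def betaA (A : NatExt r M → ℝ) : ℝ :=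
  ⨆ μ : {μ : Measure (NatExt r M) // Holonomic μ}, ∫ p, A p ∂(μ.1)

open Classical in
/-- The metric `d(x, x̄) = λ^{min {j : x_j ≠ x̄_j}}` on `Σ`. -/
noncomputable def dS (lam : ℝ) (x x' : SigSp r M) : ℝ :=
  if h : x.1 = x'.1 then 0
  else lam ^ Nat.find (show ∃ j, x.1 j ≠ x'.1 j from Function.ne_iff.mp h)

open Classical in
/-- The analogous metric on `Σ*`. -/
noncomputable def dDual (lam : ℝ) (y y' : DualSp r M) : ℝ :=
  if h : y.1 = y'.1 then 0
  else lam ^ Nat.find (show ∃ j, y.1 j ≠ y'.1 j from Function.ne_iff.mp h)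

/-- The metric on `Σ̂ ⊂ Σ* × Σ`. -/
noncomputable def dHat (lam : ℝ) (p q : NatExt r M) : ℝ :=
  max (dDual lam p.1.1 q.1.1) (dS lam p.1.2 q.1.2)

/-- `u` is `θ`-Hölder on `Σ` with constant `C`. -/
def HolderOnSig (lam θ C : ℝ) (u : SigSp r M → ℝ) : Prop :=
  ∀ x x', |u x - u x'| ≤ C * (dS lam x x') ^ θ

/-- `A` is `θ`-Hölder on `Σ̂` with constant `C`. -/
def HolderOnExt (lam θ C : ℝ) (A : NatExt r M → ℝ) : Prop :=
  ∀ p q, |A p - A q| ≤ C * (dHat lam p q) ^ θ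

/-- `(Σ,σ)` is (topologically) transitive. -/
def TransitiveShift (r : ℕ) (M : Fin r → Fin r → Bool) : Prop :=
  ∀ U V : Set (SigSp r M), IsOpen U → IsOpen V → U.Nonempty → V.Nonempty →
    ∃ n : ℕ, (shiftS^[n] '' U ∩ V).Nonempty

/-- `(Σ,σ)` is topologically mixing. -/
def MixingShift (r : ℕ) (M : Fin r → Fin r → Bool) : Prop :=
  ∀ U V : Set (SigSp r M), IsOpen U → IsOpen V → U.Nonempty → V.Nonempty →
    ∃ K : ℕ, ∀ k > K, (shiftS^[k] '' U ∩ V).Nonempty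

/-- A chain of length `k` starting at `x`: `x⁰ = x`, `x^{j+1} = τ_{yʲ}(xʲ)`. -/
def IsChainFrom (x : SigSp r M) (k : ℕ) (p : ℕ → NatExt r M) : Prop :=
  (1 ≤ k → proj1 (p 0) = x) ∧ ∀ j, j + 1 < k → proj1 (p (j + 1)) = tau (p j)

/-- A path in `P(x, x̄, ε)`: begins at `x̄`, ends within `ε` of `x`. -/
def InPath (lam ε : ℝ) (x xbar : SigSp r M) (k : ℕ) (p : ℕ → NatExt r M) : Prop :=
  1 ≤ k ∧ proj1 (p 0) = xbar ∧ (∀ j, j + 1 < k → proj1 (p (j + 1)) = tau (p j)) ∧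
    dS lam (tau (p (k - 1))) x < ε

/-- `S_A^ε(x, x̄)`. -/
noncomputable def SAeps (lam : ℝ) (A : NatExt r M → ℝ) (ε : ℝ) (x xbar : SigSp r M) : EReal :=
  sInf {v : EReal | ∃ k p, InPath lam ε x xbar k p ∧
    v = ((- ∑ j ∈ Finset.range k, (A (p j) - betaA A) : ℝ) : EReal)}

/-- The Mañé potential `S_A(x, x̄) = lim_{ε→0} S_A^ε(x, x̄)`. -/
noncomputable def ManePot (lam : ℝ) (A : NatExt r M → ℝ) (x xbar : SigSp r M) : EReal :=
  ⨆ (ε : ℝ) (_ : 0 < ε), SAeps lam A ε x xbar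

/-- `x` is non-wandering with respect to `A`. -/
def NonWand (lam : ℝ) (A : NatExt r M → ℝ) (x : SigSp r M) : Prop :=
  ∀ ε > 0, ∃ k p, InPath lam ε x x k p ∧
    |∑ j ∈ Finset.range k, (A (p j) - betaA A)| < ε

/-- `x` is `u`-connected to `x̄`. -/
def UConnected (lam : ℝ) (A : NatExt r M → ℝ) (u : SigSp r M → ℝ)
    (x xbar : SigSp r M) : Prop :=
  ∀ ε > 0, ∃ k p, InPath lam ε x xbar k p ∧
    |∑ j ∈ Finset.range k, (A (p j) - betaA A) - (u x - u xbar)| < ε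

/-- A (continuous) sub-action for `A`. -/
def SubAction (A : NatExt r M → ℝ) (u : SigSp r M → ℝ) : Prop :=
  Continuous u ∧ ∀ p : NatExt r M, u (proj1 p) ≤ u (tau p) - A p + betaA A

/-- A calibrated sub-action for `A`:
`u(x) = min_{y ∈ Σ*_x} [u(τ_y(x)) − A(y,x) + β_A]`. -/
def Calibrated (A : NatExt r M → ℝ) (u : SigSp r M → ℝ) : Prop :=
  Continuous u ∧ ∀ x : SigSp r M,
    IsLeast {v : ℝ | ∃ p : NatExt r M, proj1 p = x ∧ v = u (tau p) - A p + betaA A} (u x)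

/-- The candidate maximal sub-action `u_A` (for `β_A = 0`). -/
noncomputable def uMax (A : NatExt r M → ℝ) (x : SigSp r M) : ℝ :=
  sInf {v : ℝ | ∃ k p, IsChainFrom x k p ∧ v = -∑ j ∈ Finset.range k, A (p j)}

/-- The operator `L_ρ(f)(x) = ρ · min_{y ∈ Σ*_x} [f(τ_y(x)) − A(y,x)]`. -/
noncomputable def Lrho (A : NatExt r M → ℝ) (rho : ℝ) (f : SigSp r M → ℝ)
    (x : SigSp r M) : ℝ :=
  rho * sInf {v : ℝ | ∃ p : NatExt r M, proj1 p = x ∧ v = f (tau p) - A p}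

end AubryMather

/-- The (topological) support of a measure. -/
def msupport {X : Type*} [TopologicalSpace X] [MeasurableSpace X]
    (μ : MeasureTheory.Measure X) : Set X :=
  {p | ∀ U : Set X, IsOpen U → p ∈ U → 0 < μ U}



-- auxiliary lemmas
section Aux
variable {r : ℕ} {M : Fin r → Fin r → Bool}

lemma dS_nonneg {lam : ℝ} (h : 0 ≤ lam) (x x' : SigSp r M) : 0 ≤ dS lam x x' := by
  unfold dS
  split
  · exact le_refl 0
  · exact pow_nonneg h _

lemma dS_le_pow {lam : ℝ} (h0 : 0 ≤ lam) (h1 : lam ≤ 1) (x x' : SigSp r M) (N : ℕ)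
    (h : ∀ m, m < N → x.1 m = x'.1 m) : dS lam x x' ≤ lam ^ N := by
  unfold dS
  split
  · exact pow_nonneg h0 N
  · rename_i hne
    apply pow_le_pow_of_le_one h0 h1
    rw [Nat.le_find_iff]
    intro m hm
    simpa using h m hm

lemma dDual_self {lam : ℝ} (y : DualSp r M) : dDual lam y y = 0 := by
  unfold dDual; simp

instance SigSp.compactSpace : CompactSpace (SigSp r M) := by
  have hclosed : IsClosed {x : ℕ → Fin r | ∀ j, M (x j) (x (j + 1)) = true} := by
    have : {x : ℕ → Fin r | ∀ j, M (x j) (x (j + 1)) = true} =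
        ⋂ j : ℕ, (fun x : ℕ → Fin r => M (x j) (x (j + 1))) ⁻¹' {true} := by
      ext x; simp
    rw [this]
    refine isClosed_iInter fun j => ?_
    have h1 : Continuous (fun x : ℕ → Fin r => (x j, x (j + 1))) :=
      (continuous_apply j).prodMk (continuous_apply (j + 1))
    have hc : Continuous (fun x : ℕ → Fin r => M (x j) (x (j + 1))) :=
      (continuous_of_discreteTopology (α := Fin r × Fin r)
          (f := fun ab : Fin r × Fin r => M ab.1 ab.2)).comp h1
    exact IsClosed.preimage hc (isClosed_discrete {true})
  exact isCompact_iff_compactSpace.mp hclosed.isCompact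

instance SigSp.firstCountable : FirstCountableTopology (SigSp r M) :=
  TopologicalSpace.firstCountableTopology_induced (SigSp r M) (ℕ → Fin r) Subtype.val

lemma eventually_agree {x : ℕ → SigSp r M} {z : SigSp r M}
    (h : Filter.Tendsto x Filter.atTop (nhds z)) (N : ℕ) :
    ∀ᶠ i in Filter.atTop, ∀ m, m < N → (x i).1 m = z.1 m := by
  have hU : IsOpen {s : SigSp r M | ∀ m, m < N → s.1 m = z.1 m} := by
    have : {s : SigSp r M | ∀ m, m < N → s.1 m = z.1 m} =
        ⋂ m ∈ Finset.range N, (fun s : SigSp r M => s.1 m) ⁻¹' {z.1 m} := by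
      ext s; simp
    rw [this]
    refine isOpen_biInter_finset fun m _ => IsOpen.preimage ?_ (isOpen_discrete _)
    exact (continuous_apply m).comp continuous_subtype_val
  exact h.eventually (hU.eventually_mem (fun m _ => rfl))
end Aux

section Shadow
variable {r : ℕ} {M : Fin r → Fin r → Bool}

/-- Shadowing: a backward chain starting near `z` can be replaced by one starting exactly
at `z`, with exponentially small change in the potentials. -/
lemma shadow_chain {lam θ C : ℝ} (hlam0 : 0 < lam) (hlam1 : lam < 1) (hθ : 0 < θ) (hC : 0 ≤ C)
    {A : NatExt r M → ℝ} (hA : ∀ p q, |A p - A q| ≤ C * (dHat lam p q) ^ θ)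
    (q : ℕ → NatExt r M) (hchain : ∀ k, proj1 (q (k + 1)) = tau (q k))
    (z : SigSp r M) (N k1 : ℕ) (hN : 1 ≤ N)
    (hag : ∀ m, m < N → (proj1 (q k1)).1 m = z.1 m) :
    ∃ p' : ℕ → NatExt r M,
      proj1 (p' 0) = z ∧
      (∀ j, proj1 (p' (j + 1)) = tau (p' j)) ∧
      (∀ j m, m < N + j → (tau (p' j)).1 m = (proj1 (q (k1 + j + 1))).1 m) ∧
      (∀ j, |A (p' j) - A (q (k1 + j))| ≤ C * ((lam ^ θ) ^ (N + j))) := by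
  classical
  set Y : ℕ → ℕ → Fin r := fun j => (proj1 (q (k1 + j))).1 with hY
  -- basic facts about Y
  have hYsucc : ∀ j, Y (j + 1) = prepend ((q (k1 + j)).1.1.1 0) (Y j) := by
    intro j
    have := congrArg Subtype.val (hchain (k1 + j))
    exact this
  have hYshift : ∀ j t, Y j (t + j) = Y 0 t := by
    intro j
    induction j with
    | zero => intro t; rfl
    | succ j ih =>
      intro t
      have : Y (j + 1) (t + (j + 1)) = Y j (t + j) := by
        rw [hYsucc j]
        rfl
      rw [this, ih t]
  -- the shadow sequence
  set w : ℕ → ℕ → Fin r := fun j m => if m < j then Y j m else z.1 (m - j) with hw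
  have hw0 : w 0 = z.1 := by
    funext m; simp [hw]
  have hwsucc : ∀ j, w (j + 1) = prepend ((q (k1 + j)).1.1.1 0) (w j) := by
    intro j
    funext m
    cases m with
    | zero =>
      have h0 : (0 : ℕ) < j + 1 := Nat.succ_pos j
      simp only [hw, if_pos h0]
      rw [hYsucc j]
      rfl
    | succ m =>
      show (if m + 1 < j + 1 then Y (j + 1) (m + 1) else z.1 (m + 1 - (j + 1)))
          = w j m
      rw [hYsucc j]
      by_cases hm : m < j
      · rw [if_pos (Nat.succ_lt_succ hm)]
        show Y j m = w j m
        simp [hw, if_pos hm]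
      · rw [if_neg (fun hc => hm (Nat.lt_of_succ_lt_succ hc))]
        have : m + 1 - (j + 1) = m - j := Nat.succ_sub_succ m j
        rw [this]
        simp [hw, if_neg hm]
  -- agreement invariant
  have hinv : ∀ j m, m < N + j → w j m = Y j m := by
    intro j m hm
    by_cases hmj : m < j
    · simp [hw, if_pos hmj]
    · push_neg at hmj
      have h1 : w j m = z.1 (m - j) := by simp [hw, if_neg (not_lt.mpr hmj)]
      have h2 : Y j m = Y 0 (m - j) := by
        have h3 : m - j + j = m := Nat.sub_add_cancel hmj
        rw [← hYshift j (m - j), h3]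
      rw [h1, h2]
      exact (hag (m - j) (by omega)).symm
  -- w j is admissible
  have hwmem : ∀ j m, M (w j m) (w j (m + 1)) = true := by
    intro j
    induction j with
    | zero =>
      intro m
      rw [hw0]
      exact z.2 m
    | succ j ih =>
      intro m
      rw [hwsucc j]
      cases m with
      | zero =>
        show M ((q (k1 + j)).1.1.1 0) (w j 0) = true
        have h0 : w j 0 = Y j 0 := hinv j 0 (by omega)
        rw [h0]
        exact (q (k1 + j)).2
      | succ m =>
        show M (w j m) (w j (m + 1)) = true
        exact ih m
  -- the shadow chain in NatExt
  have hwM : ∀ j, M ((q (k1 + j)).1.1.1 0) (w j 0) = true := by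
    intro j
    have h0 : w j 0 = Y j 0 := hinv j 0 (by omega)
    rw [h0]
    exact (q (k1 + j)).2
  refine ⟨fun j => ⟨((q (k1 + j)).1.1, ⟨w j, hwmem j⟩), hwM j⟩, ?_, ?_, ?_, ?_⟩
  · exact Subtype.ext hw0
  · intro j
    exact Subtype.ext (hwsucc j)
  · intro j m hm
    have h1 : (tau (⟨((q (k1 + j)).1.1, ⟨w j, hwmem j⟩), hwM j⟩ : NatExt r M)).1 = w (j + 1) :=
      (hwsucc j).symm
    rw [h1]
    have := hinv (j + 1) m (by omega)
    rw [this]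
    rfl
  · intro j
    have hd := hA (⟨((q (k1 + j)).1.1, ⟨w j, hwmem j⟩), hwM j⟩ : NatExt r M) (q (k1 + j))
    have hdHat_le : dHat lam (⟨((q (k1 + j)).1.1, ⟨w j, hwmem j⟩), hwM j⟩ : NatExt r M)
        (q (k1 + j)) ≤ lam ^ (N + j) := by
      unfold dHat
      rw [dDual_self]
      apply max_le
      · positivity
      · exact dS_le_pow hlam0.le hlam1.le _ _ (N + j) (fun m hm => hinv j m hm)
    have hdHat_nonneg : 0 ≤ dHat lam (⟨((q (k1 + j)).1.1, ⟨w j, hwmem j⟩), hwM j⟩ : NatExt r M)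
        (q (k1 + j)) := le_trans (dS_nonneg hlam0.le _ _) (le_max_right _ _)
    have hpow : ((lam ^ (N + j) : ℝ)) ^ θ = (lam ^ θ) ^ (N + j) := by
      rw [← Real.rpow_natCast lam (N + j), ← Real.rpow_natCast (lam ^ θ) (N + j),
        ← Real.rpow_mul hlam0.le, ← Real.rpow_mul hlam0.le, mul_comm]
    calc |A (⟨((q (k1 + j)).1.1, ⟨w j, hwmem j⟩), hwM j⟩ : NatExt r M) - A (q (k1 + j))|
        ≤ C * (dHat lam (⟨((q (k1 + j)).1.1, ⟨w j, hwmem j⟩), hwM j⟩ : NatExt r M)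
            (q (k1 + j))) ^ θ := hd
      _ ≤ C * ((lam ^ (N + j)) ^ θ) :=
          mul_le_mul_of_nonneg_left (Real.rpow_le_rpow hdHat_nonneg hdHat_le hθ.le) hC
      _ = C * ((lam ^ θ) ^ (N + j)) := by rw [hpow]
end Shadow


section Key
open Filter Topology

private lemma calibrated_key
    {r : ℕ} {M : Fin r → Fin r → Bool}
    {lam θ C : ℝ} (hlam0 : 0 < lam) (hlam1 : lam < 1) (hθ : 0 < θ) (hC : 0 ≤ C)
    {A : NatExt r M → ℝ} (hA : HolderOnExt lam θ C A)
    {u u' : SigSp r M → ℝ} (hu : Calibrated A u) (hu' : Calibrated A u')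
    (hyp : ∀ x, NonWand lam A x → u x ≤ u' x) (xbar : SigSp r M) :
    u xbar ≤ u' xbar := by
  classical
  obtain ⟨hucont, hucal⟩ := hu
  obtain ⟨hu'cont, hu'cal⟩ := hu'
  -- minimizing backward chain for the calibrated sub-action `u'`
  have hex : ∀ x : SigSp r M, ∃ p : NatExt r M,
      proj1 p = x ∧ u' x = u' (tau p) - A p + betaA A := fun x => (hu'cal x).1
  choose F hF1 hF2 using hex
  let q : ℕ → NatExt r M := fun k => Nat.rec (F xbar) (fun _ p => F (tau p)) k
  have hchain : ∀ k, proj1 (q (k + 1)) = tau (q k) := fun k => hF1 _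
  have hproj0 : proj1 (q 0) = xbar := hF1 _
  have hstep : ∀ k, u' (proj1 (q k)) = u' (proj1 (q (k + 1))) - A (q k) + betaA A := by
    intro k
    cases k with
    | zero =>
      rw [hproj0, hchain 0]
      exact hF2 xbar
    | succ m =>
      rw [hchain m, hchain (m + 1)]
      exact hF2 (tau (q m))
  have hsub : ∀ p : NatExt r M, u (proj1 p) ≤ u (tau p) - A p + betaA A :=
    fun p => (hucal (proj1 p)).2 ⟨p, rfl, rfl⟩
  have hTel : ∀ k, u' xbar = u' (proj1 (q k)) - ∑ j ∈ Finset.range k, (A (q j) - betaA A) := by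
    intro k
    induction k with
    | zero => simp [hproj0]
    | succ n ih =>
      rw [Finset.sum_range_succ, ih, hstep n]
      ring
  have hTel' : ∀ k, u xbar ≤ u (proj1 (q k)) - ∑ j ∈ Finset.range k, (A (q j) - betaA A) := by
    intro k
    induction k with
    | zero => simp [hproj0]
    | succ n ih =>
      rw [Finset.sum_range_succ]
      have h2 := hsub (q n)
      rw [← hchain n] at h2
      linarith
  have hdiff : ∀ k, u xbar - u' xbar ≤ u (proj1 (q k)) - u' (proj1 (q k)) := by
    intro k
    have h1 := hTel k
    have h2 := hTel' k
    linarith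
  obtain ⟨z, -, φ, hφ, hconv⟩ :=
    isCompact_univ.tendsto_subseq (x := fun k => proj1 (q k)) (fun k => Set.mem_univ _)
  have hnw : NonWand lam A z := by
    intro ε hε
    have hρ0 : (0:ℝ) < lam ^ θ := Real.rpow_pos_of_pos hlam0 θ
    have hρ1 : lam ^ θ < 1 := Real.rpow_lt_one hlam0.le hlam1 hθ
    obtain ⟨N, hN, hN1, hN2⟩ : ∃ N : ℕ, 1 ≤ N ∧ lam ^ N < ε ∧
        C * (lam ^ θ) ^ N * (1 - lam ^ θ)⁻¹ < ε / 2 := by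
      have h1 : Tendsto (fun n : ℕ => lam ^ n) atTop (𝓝 0) :=
        tendsto_pow_atTop_nhds_zero_of_lt_one hlam0.le hlam1
      have h2 : Tendsto (fun n : ℕ => C * (lam ^ θ) ^ n * (1 - lam ^ θ)⁻¹) atTop (𝓝 0) := by
        have h3 := ((tendsto_pow_atTop_nhds_zero_of_lt_one hρ0.le
          hρ1).const_mul C).mul_const (1 - lam ^ θ)⁻¹
        simpa using h3
      have e1 := h1.eventually (gt_mem_nhds hε)
      have e2 := h2.eventually (gt_mem_nhds (by linarith : (0:ℝ) < ε / 2))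
      obtain ⟨N, hN⟩ := ((eventually_ge_atTop 1).and (e1.and e2)).exists
      exact ⟨N, hN.1, hN.2.1, hN.2.2⟩
    have hEag := eventually_agree hconv N
    have hucv : Tendsto (fun i => u' (proj1 (q (φ i)))) atTop (𝓝 (u' z)) :=
      (hu'cont.tendsto z).comp hconv
    have huev : ∀ᶠ i in atTop, |u' (proj1 (q (φ i))) - u' z| < ε / 4 := by
      have h4 := Metric.tendsto_nhds.mp hucv (ε / 4) (by linarith)
      simpa [Real.dist_eq] using h4
    obtain ⟨i1, hi1⟩ := eventually_atTop.mp (hEag.and huev)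
    have hk12 : φ i1 < φ (i1 + 1) := hφ (Nat.lt_succ_self i1)
    set k1 := φ i1 with hk1def
    set k2 := φ (i1 + 1) with hk2def
    set L := k2 - k1 with hLdef
    have hL1 : 1 ≤ L := by omega
    have hk2eq : k1 + L = k2 := by omega
    have hag1 : ∀ m, m < N → (proj1 (q k1)).1 m = z.1 m := (hi1 i1 le_rfl).1
    have hag2 : ∀ m, m < N → (proj1 (q k2)).1 m = z.1 m := (hi1 (i1 + 1) (Nat.le_succ i1)).1
    have hu1 : |u' (proj1 (q k1)) - u' z| < ε / 4 := (hi1 i1 le_rfl).2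
    have hu2 : |u' (proj1 (q k2)) - u' z| < ε / 4 := (hi1 (i1 + 1) (Nat.le_succ i1)).2
    obtain ⟨p', hp0, hp', hpend, hpA⟩ :=
      shadow_chain hlam0 hlam1 hθ hC hA q hchain z N k1 hN hag1
    have hagend : ∀ m, m < N → (tau (p' (L - 1))).1 m = z.1 m := by
      intro m hm
      have h1 := hpend (L - 1) m (by omega)
      have h2 : k1 + (L - 1) + 1 = k2 := by omega
      rw [h1, h2]
      exact hag2 m hm
    have hend : dS lam (tau (p' (L - 1))) z < ε :=
      lt_of_le_of_lt (dS_le_pow hlam0.le hlam1.le _ _ N hagend) hN1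
    have hsum_q : ∑ j ∈ Finset.range L, (A (q (k1 + j)) - betaA A)
        = u' (proj1 (q k2)) - u' (proj1 (q k1)) := by
      have t1 := hTel k1
      have t2 := hTel k2
      have hsplit : ∑ j ∈ Finset.range k2, (A (q j) - betaA A)
          = ∑ j ∈ Finset.range k1, (A (q j) - betaA A)
            + ∑ j ∈ Finset.range L, (A (q (k1 + j)) - betaA A) := by
        rw [← hk2eq]
        exact Finset.sum_range_add _ k1 L
      linarith
    have hsum_diff : |∑ j ∈ Finset.range L, (A (p' j) - betaA A)
        - ∑ j ∈ Finset.range L, (A (q (k1 + j)) - betaA A)|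
        ≤ C * (lam ^ θ) ^ N * (1 - lam ^ θ)⁻¹ := by
      have h1 : ∑ j ∈ Finset.range L, (A (p' j) - betaA A)
          - ∑ j ∈ Finset.range L, (A (q (k1 + j)) - betaA A)
          = ∑ j ∈ Finset.range L, (A (p' j) - A (q (k1 + j))) := by
        rw [← Finset.sum_sub_distrib]
        exact Finset.sum_congr rfl fun j _ => by ring
      rw [h1]
      calc |∑ j ∈ Finset.range L, (A (p' j) - A (q (k1 + j)))|
          ≤ ∑ j ∈ Finset.range L, |A (p' j) - A (q (k1 + j))| :=
            Finset.abs_sum_le_sum_abs _ _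
        _ ≤ ∑ j ∈ Finset.range L, C * ((lam ^ θ) ^ (N + j)) :=
            Finset.sum_le_sum fun j _ => hpA j
        _ = C * (lam ^ θ) ^ N * ∑ j ∈ Finset.range L, (lam ^ θ) ^ j := by
            rw [Finset.mul_sum]
            exact Finset.sum_congr rfl fun j _ => by rw [pow_add]; ring
        _ ≤ C * (lam ^ θ) ^ N * (1 - lam ^ θ)⁻¹ := by
            apply mul_le_mul_of_nonneg_left _ (by positivity)
            calc ∑ j ∈ Finset.range L, (lam ^ θ) ^ j
                ≤ ∑' j : ℕ, (lam ^ θ) ^ j :=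
                  Summable.sum_le_tsum _ (fun i _ => by positivity)
                    (summable_geometric_of_lt_one hρ0.le hρ1)
              _ = (1 - lam ^ θ)⁻¹ := tsum_geometric_of_lt_one hρ0.le hρ1
    refine ⟨L, p', ⟨hL1, hp0, fun j _ => hp' j, hend⟩, ?_⟩
    have habs1 : |∑ j ∈ Finset.range L, (A (q (k1 + j)) - betaA A)| < ε / 2 := by
      rw [hsum_q]
      have h5 : |u' (proj1 (q k2)) - u' (proj1 (q k1))|
          ≤ |u' (proj1 (q k2)) - u' z| + |u' z - u' (proj1 (q k1))| :=
        abs_sub_le _ _ _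
      rw [abs_sub_comm (u' z)] at h5
      linarith
    have habs2 : |∑ j ∈ Finset.range L, (A (p' j) - betaA A)|
        ≤ |∑ j ∈ Finset.range L, (A (p' j) - betaA A)
          - ∑ j ∈ Finset.range L, (A (q (k1 + j)) - betaA A)|
          + |∑ j ∈ Finset.range L, (A (q (k1 + j)) - betaA A)| := by
      have := abs_add_le (∑ j ∈ Finset.range L, (A (p' j) - betaA A)
          - ∑ j ∈ Finset.range L, (A (q (k1 + j)) - betaA A))
        (∑ j ∈ Finset.range L, (A (q (k1 + j)) - betaA A))
      simpa using this
    linarith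
  have hz := hyp z hnw
  have hlim : Tendsto (fun i => u (proj1 (q (φ i))) - u' (proj1 (q (φ i)))) atTop
      (𝓝 (u z - u' z)) :=
    ((hucont.tendsto z).comp hconv).sub ((hu'cont.tendsto z).comp hconv)
  have hfin : u xbar - u' xbar ≤ u z - u' z :=
    ge_of_tendsto hlim (Eventually.of_forall fun i => hdiff (φ i))
  linarith

end Key

/-- two calibrated sub-actions comparable on `Ω(A)` are comparable everywhere;
in particular agreement on `Ω(A)` forces equality. -/
theorem calibrated_comparison
    {r : ℕ} {M : Fin r → Fin r → Bool}
    (htrans : TransitiveShift r M)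
    (lam θ C : ℝ) (hlam0 : 0 < lam) (hlam1 : lam < 1) (hθ : 0 < θ) (hC : 0 ≤ C)
    (A : NatExt r M → ℝ) (hA : HolderOnExt lam θ C A)
    (u u' : SigSp r M → ℝ) (hu : Calibrated A u) (hu' : Calibrated A u') :
    ((∀ x, NonWand lam A x → u x ≤ u' x) → ∀ x, u x ≤ u' x) ∧
    ((∀ x, NonWand lam A x → u x = u' x) → u = u') := by
  constructor
  · intro h x
    exact calibrated_key hlam0 hlam1 hθ hC hA hu hu' h x
  · intro h
    funext x
    exact le_antisymm
      (calibrated_key hlam0 hlam1 hθ hC hA hu hu' (fun y hy => (h y hy).le) x)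
      (calibrated_key hlam0 hlam1 hθ hC hA hu' hu (fun y hy => (h y hy).ge) x)
end

section
/- If μ̂ is an A-maximizing holonomic probability such that μ̂∘π₁⁻¹ is ergodic, and u, u′ are continuous sub-actions for A, then u − u′ is constant on π₁(supp μ̂). -/
open MeasureTheory

/-!
Integrating the sub-action inequality `u ∘ π₁ ≤ u ∘ τ - A + β_A` against the holonomic `μ̂`
gives `∫ u ∘ τ - ∫ A + β_A - ∫ u ∘ π₁ = 0`, so the inequality is an equality `μ̂`-a.e.
Subtracting the equalities for `u` and `u'`, `v = u - u'` satisfies `v ∘ π₁ = v ∘ τ` `μ̂`-a.e.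
Since `σ ∘ τ = π₁` and holonomy makes `τ` and `π₁` push `μ̂` to the same measure `ν`, this says
`v ∘ σ = v` `ν`-a.e., and ergodicity of `ν` makes `v` `ν`-a.e. constant. As `v` is continuous,
the constant value holds everywhere on `π₁(supp μ̂)`.
-/

open MeasureTheory Filter TopologicalSpace

instance {X : Type*} [TopologicalSpace X]
    [SecondCountableTopology X] {p : X → Prop} : SecondCountableTopology {x // p x} :=
  inferInstanceAs (SecondCountableTopology (Set.ofPred p))

theorem Continuous.eqOn_msupport_of_ae_eq {X Y : Type*} [TopologicalSpace X] [MeasurableSpace X]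
    [TopologicalSpace Y] [T2Space Y] {μ : Measure X} {f g : X → Y} (hf : Continuous f)
    (hg : Continuous g) (h : f =ᵐ[μ] g) : Set.EqOn f g (msupport μ) := by
  intro x hx
  by_contra hne
  have hnull : μ {y | f y ≠ g y} = 0 := ae_iff.mp h
  exact (hx _ (isOpen_ne_fun hf hg) hne).ne' hnull

section AubryMather

variable {r : ℕ} {M : Fin r → Fin r → Bool}

theorem isClosed_setOf_sigSp : IsClosed {x : ℕ → Fin r | ∀ j, M (x j) (x (j + 1)) = true} := by
  simp only [Set.ofPred_forall]
  exact isClosed_iInter fun j => isClosed_eq (by fun_prop) continuous_const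

theorem isClosed_setOf_dualSp : IsClosed {y : ℕ → Fin r | ∀ j, M (y (j + 1)) (y j) = true} := by
  simp only [Set.ofPred_forall]
  exact isClosed_iInter fun j => isClosed_eq (by fun_prop) continuous_const

theorem isClosed_setOf_natExt :
    IsClosed {p : DualSp r M × SigSp r M | M (p.1.1 0) (p.2.1 0) = true} :=
  have h : Continuous fun p : DualSp r M × SigSp r M => (p.1.1 0, p.2.1 0) :=
    ((continuous_apply 0).comp (by fun_prop)).prodMk ((continuous_apply 0).comp (by fun_prop))
  isClosed_eq ((continuous_of_discreteTopology (f := fun q : Fin r × Fin r => M q.1 q.2)).comp h)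
    continuous_const

instance : CompactSpace (SigSp r M) :=
  isCompact_iff_compactSpace.mp isClosed_setOf_sigSp.isCompact

instance : CompactSpace (DualSp r M) :=
  isCompact_iff_compactSpace.mp isClosed_setOf_dualSp.isCompact

instance : CompactSpace (NatExt r M) :=
  isCompact_iff_compactSpace.mp isClosed_setOf_natExt.isCompact

@[fun_prop]
theorem continuous_proj1 : Continuous (proj1 : NatExt r M → SigSp r M) := by
  unfold proj1; fun_prop

@[fun_prop]
theorem continuous_tau : Continuous (tau : NatExt r M → SigSp r M) := by
  refine Continuous.subtype_mk (continuous_pi fun n => ?_) _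
  cases n with
  | zero => exact (continuous_apply 0).comp (by fun_prop)
  | succ m => exact (continuous_apply m).comp (by fun_prop)

@[fun_prop]
theorem continuous_shiftS : Continuous (shiftS : SigSp r M → SigSp r M) := by
  refine .subtype_mk (continuous_pi fun n => ?_) _
  exact (continuous_apply (n + 1)).comp continuous_subtype_val

theorem shiftS_tau (p : NatExt r M) : shiftS (tau p) = proj1 p := rfl

theorem Holonomic.integral_comp_tau {μ : Measure (NatExt r M)} (hμ : Holonomic μ)
    {w : SigSp r M → ℝ} (hw : Continuous w) : ∫ p, w (tau p) ∂μ = ∫ p, w (proj1 p) ∂μ :=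
  hμ.2 ⟨w, hw⟩

theorem Holonomic.map_tau_eq_map_proj1 {μ : Measure (NatExt r M)} (hμ : Holonomic μ) :
    μ.map tau = μ.map proj1 := by
  have := hμ.1
  refine ext_of_forall_integral_eq_of_IsFiniteMeasure fun f => ?_
  rw [integral_map continuous_tau.aemeasurable f.continuous.aestronglyMeasurable,
    integral_map continuous_proj1.aemeasurable f.continuous.aestronglyMeasurable]
  exact hμ.integral_comp_tau f.continuous

theorem SubAction.ae_eq_of_integral_eq_betaA {A : NatExt r M → ℝ} {w : SigSp r M → ℝ}
    (hw : SubAction A w) (hA : Continuous A) {μ : Measure (NatExt r M)} (hμ : Holonomic μ)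
    (hmax : ∫ p, A p ∂μ = betaA A) :
    ∀ᵐ p ∂μ, w (proj1 p) = w (tau p) - A p + betaA A := by
  have := hμ.1
  have hinteg (g : NatExt r M → ℝ) (hg : Continuous g) : Integrable g μ :=
    hg.integrable_of_hasCompactSupport (.of_compactSpace _)
  have hwc : Continuous w := hw.1
  let F : NatExt r M → ℝ := fun p => w (tau p) - A p + betaA A - w (proj1 p)
  have hF_nonneg : 0 ≤ F := fun p => sub_nonneg.mpr (hw.2 p)
  have hF_integral : ∫ p, F p ∂μ = 0 := by
    rw [integral_sub (hinteg _ (by fun_prop)) (hinteg _ (by fun_prop)),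
      integral_add (hinteg _ (by fun_prop)) (integrable_const _),
      integral_sub (hinteg _ (by fun_prop)) (hinteg _ hA), hμ.integral_comp_tau hwc, hmax]
    simp
  filter_upwards [(integral_eq_zero_iff_of_nonneg hF_nonneg (hinteg F (by fun_prop))).mp hF_integral]
    with p hp
  exact (sub_eq_zero.mp hp).symm

theorem SubAction.sub_comp_shiftS_ae_eq {A : NatExt r M → ℝ} {u u' : SigSp r M → ℝ}
    (hu : SubAction A u) (hu' : SubAction A u') (hA : Continuous A) {μ : Measure (NatExt r M)}
    (hμ : Holonomic μ) (hmax : ∫ p, A p ∂μ = betaA A) :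
    (u - u') ∘ shiftS =ᵐ[μ.map proj1] u - u' := by
  have hv : Continuous (u - u') := hu.1.sub hu'.1
  rw [← hμ.map_tau_eq_map_proj1, EventuallyEq, ae_map_iff continuous_tau.aemeasurable
    (isClosed_eq (hv.comp continuous_shiftS) hv).measurableSet]
  filter_upwards [hu.ae_eq_of_integral_eq_betaA hA hμ hmax,
    hu'.ae_eq_of_integral_eq_betaA hA hμ hmax] with p h h'
  simp only [Function.comp_apply, Pi.sub_apply, shiftS_tau]
  linarith

end AubryMather

/-- if `μ̂` is an `A`-maximizing holonomic probability whose projection is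
ergodic, then the difference of any two continuous sub-actions is constant on
`π₁(supp μ̂)`. -/
theorem subaction_difference_constant
    {r : ℕ} {M : Fin r → Fin r → Bool}
    (A : NatExt r M → ℝ) (hA : Continuous A)
    (μ : Measure (NatExt r M)) (hμ : Holonomic μ)
    (hmax : (∫ p, A p ∂μ) = betaA A)
    (herg : Ergodic shiftS (μ.map proj1))
    (u u' : SigSp r M → ℝ) (hu : SubAction A u) (hu' : SubAction A u') :
    ∃ c : ℝ, ∀ x ∈ proj1 '' msupport μ, u x - u' x = c := by
  have hv : Continuous (u - u') := hu.1.sub hu'.1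
  obtain ⟨c, hc⟩ := herg.ae_eq_const_of_ae_eq_comp₀ hv.measurable.nullMeasurable
    (hu.sub_comp_shiftS_ae_eq hu' hA hμ hmax)
  refine ⟨c, ?_⟩
  rintro _ ⟨p, hp, rfl⟩
  exact (hv.comp continuous_proj1).eqOn_msupport_of_ae_eq continuous_const
    (ae_of_ae_map continuous_proj1.aemeasurable hc) hp
end
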